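/- arXiv:2102.11576 — 6 statements merged into one kernel-verified Lean document; each statement's English description precedes it below -/
import Mathlib

section
/- For every α ∈ (1,2) and every integer n ≥ 1, the partial sums of the Grünwald–Letnikov coefficients are strictly negative: ∑_{l=0}^{n} g_l^{(α)} < 0. -/
/-- Grünwald–Letnikov coefficients: `g α 0 = 1`,
`g α l = (1 - (α+1)/l) * g α (l-1)` for `l ≥ 1`. -/
noncomputable def g (α : ℝ) : ℕ → ℝ
  | 0 => 1
  | l + 1 => (1 - (α + 1) / ((l : ℝ) + 1)) * g α l

lemma g_key (α : ℝ) : ∀ n : ℕ,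
    g α (n + 1) = -(α / ((n : ℝ) + 1)) * ∑ l ∈ Finset.range (n + 1), g α l := by
  intro n
  induction n with
  | zero => simp [g]; try ring
  | succ n ih =>
    have h1 : ((n : ℝ) + 1) ≠ 0 := by positivity
    have h2 : ((n : ℝ) + 1 + 1) ≠ 0 := by positivity
    have : g α (n + 2) = (1 - (α + 1) / ((n : ℝ) + 1 + 1)) * g α (n + 1) := by
      simp [g]
    rw [Finset.sum_range_succ, this, ih]
    push_cast
    field_simp
    ring

theorem stmt3 (α : ℝ) (hα₁ : 1 < α) (hα₂ : α < 2) :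
    ∀ n : ℕ, 1 ≤ n → ∑ l ∈ Finset.range (n + 1), g α l < 0 := by
  intro n hn
  induction n with
  | zero => omega
  | succ m ih =>
    rcases Nat.eq_or_lt_of_le hn with h | h
    · -- m = 0
      have hm : m = 0 := by omega
      subst hm
      simp [Finset.sum_range_succ, g]
      linarith
    · have hm : 1 ≤ m := by omega
      have hS := ih hm
      rw [Finset.sum_range_succ, g_key α m]
      have hfac : 0 < 1 - α / ((m : ℝ) + 1) := by
        have hm' : (2 : ℝ) ≤ (m : ℝ) + 1 := by
          have : (1 : ℝ) ≤ (m : ℝ) := by exact_mod_cast hm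
          linarith
        have : α / ((m : ℝ) + 1) < 1 := by
          rw [div_lt_one (by linarith)]
          linarith
        linarith
      have : ∑ l ∈ Finset.range (m + 1), g α l + -(α / ((m : ℝ) + 1)) * ∑ l ∈ Finset.range (m + 1), g α l
          = (1 - α / ((m : ℝ) + 1)) * ∑ l ∈ Finset.range (m + 1), g α l := by ring
      rw [this]
      exact mul_neg_of_pos_of_neg hfac hS
end

section
/- For every α ∈ (1,2) and every integer n ≥ 1, the matrix G_n^{(α)} is strictly diagonally dominant with negative diagonal entries: its diagonal entries equal 2g_1^{(α)} = -2α < 0, its off-diagonal entries are nonnegative, and for every row i, ∑_{j ≠ i} |[G_n^{(α)}]_{ij}| < |[G_n^{(α)}]_{ii}| = 2α. -/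
/-- First column (Toeplitz symbol) of `G_n^{(α)}`: entry at distance `d` is
`2 g₁` if `d = 0`, `g₀ + g₂` if `d = 1`, and `g_{d+1}` if `d ≥ 2`. -/
noncomputable def gSymb (α : ℝ) : ℕ → ℝ
  | 0 => 2 * g α 1
  | 1 => g α 0 + g α 2
  | d + 2 => g α (d + 3)

/-- The symmetric Toeplitz matrix `G_n^{(α)}`. -/
noncomputable def Gmat (α : ℝ) (n : ℕ) : Matrix (Fin n) (Fin n) ℝ :=
  Matrix.of fun i j => gSymb α (((i : ℤ) - (j : ℤ)).natAbs)

noncomputable def S (α : ℝ) (m : ℕ) : ℝ := ∑ l ∈ Finset.range m, g α l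

lemma g_one (α : ℝ) : g α 1 = -α := by simp [g]

lemma g_succ_eq (α : ℝ) : ∀ m : ℕ, g α (m + 1) = -(α / (m + 1)) * S α (m + 1) := by
  intro m
  induction m with
  | zero => simp [g, S]
  | succ m ih =>
      have hS : S α (m + 2) = S α (m + 1) + g α (m + 1) := by
        simp [S, Finset.sum_range_succ]
      have h1 : ((m : ℝ) + 1) ≠ 0 := by positivity
      have h2 : ((m : ℝ) + 2) ≠ 0 := by positivity
      have : g α (m + 2) = (1 - (α + 1) / ((m : ℝ) + 2)) * g α (m + 1) := by
        show g α (m + 1 + 1) = _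
        rw [g]; push_cast; ring_nf
      rw [this, ih, hS, ih]
      push_cast
      field_simp
      ring

lemma S_neg (α : ℝ) (hα₁ : 1 < α) (hα₂ : α < 2) : ∀ m : ℕ, S α (m + 2) < 0 := by
  intro m
  induction m with
  | zero => simp [S, Finset.sum_range_succ, g_one, g]; linarith
  | succ m ih =>
      have hS : S α (m + 3) = S α (m + 2) + g α (m + 2) := by
        simp [S, Finset.sum_range_succ]
      rw [hS, g_succ_eq α (m + 1)]
      have : S α (m + 2) + -(α / (↑(m + 1) + 1)) * S α (m + 2)
          = (1 - α / ((m : ℝ) + 2)) * S α (m + 2) := by push_cast; ring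
      rw [this]
      have hf : 0 < 1 - α / ((m : ℝ) + 2) := by
        rw [sub_pos, div_lt_one (by positivity)]
        have : (2 : ℝ) ≤ (m : ℝ) + 2 := by linarith [Nat.cast_nonneg (α := ℝ) m]
        linarith
      exact mul_neg_of_pos_of_neg hf ih

lemma g_pos (α : ℝ) (hα₁ : 1 < α) (hα₂ : α < 2) : ∀ l : ℕ, 0 < g α (l + 2) := by
  intro l
  induction l with
  | zero =>
      have : g α 2 = (1 - (α + 1) / 2) * -α := by
        show g α (1 + 1) = _; rw [g, g_one]; norm_num
      rw [this]
      nlinarith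
  | succ l ih =>
      have : g α (l + 3) = (1 - (α + 1) / ((l : ℝ) + 3)) * g α (l + 2) := by
        show g α (l + 2 + 1) = _; rw [g]; push_cast; ring_nf
      rw [this]
      have hf : 0 < 1 - (α + 1) / ((l : ℝ) + 3) := by
        rw [sub_pos, div_lt_one (by positivity)]
        have : (3 : ℝ) ≤ (l : ℝ) + 3 := by linarith [Nat.cast_nonneg (α := ℝ) l]
        linarith
      exact mul_pos hf ih

noncomputable def T (α : ℝ) (N : ℕ) : ℝ := ∑ d ∈ Finset.range N, gSymb α (d + 1)

lemma gSymb_nonneg (α : ℝ) (hα₁ : 1 < α) (hα₂ : α < 2) (d : ℕ) : 0 ≤ gSymb α (d + 1) := by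
  match d with
  | 0 =>
      show 0 ≤ g α 0 + g α 2
      have := g_pos α hα₁ hα₂ 0
      have : g α 0 = 1 := rfl
      linarith [g_pos α hα₁ hα₂ 0]
  | d + 1 =>
      show 0 ≤ g α (d + 3)
      exact le_of_lt (g_pos α hα₁ hα₂ (d + 1))

lemma T_eq (α : ℝ) : ∀ N : ℕ, T α (N + 1) = α + S α (N + 3) := by
  intro N
  induction N with
  | zero =>
      have h1 : T α 1 = gSymb α 1 := by simp [T]
      have h2 : S α 3 = g α 0 + g α 1 + g α 2 := by
        simp [S, Finset.sum_range_succ]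
      rw [h1, h2, g_one]
      show g α 0 + g α 2 = _
      ring
  | succ N ih =>
      have h1 : T α (N + 2) = T α (N + 1) + gSymb α (N + 2) := by
        simp [T, Finset.sum_range_succ]
      have h2 : S α (N + 4) = S α (N + 3) + g α (N + 3) := by
        simp [S, Finset.sum_range_succ]
      have h3 : gSymb α (N + 2) = g α (N + 3) := rfl
      rw [h1, h2, ih, h3]; ring

lemma T_lt (α : ℝ) (hα₁ : 1 < α) (hα₂ : α < 2) (N : ℕ) : T α N < α := by
  match N with
  | 0 => simpa [T] using lt_of_le_of_lt one_pos.le hα₁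
  | N + 1 =>
      rw [T_eq]
      linarith [S_neg α hα₁ hα₂ (N + 1)]

lemma row_left (α : ℝ) (n : ℕ) (i : Fin n) :
    ∑ j ∈ Finset.univ.filter (fun j : Fin n => (j : ℕ) < (i : ℕ)),
      gSymb α (((i : ℤ) - (j : ℤ)).natAbs) = T α (i : ℕ) := by
  rw [T]
  have step1 : ∑ j ∈ Finset.univ.filter (fun j : Fin n => (j : ℕ) < (i : ℕ)),
      gSymb α (((i : ℤ) - (j : ℤ)).natAbs)
      = ∑ j ∈ Finset.univ.filter (fun j : Fin n => (j : ℕ) < (i : ℕ)),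
      gSymb α ((i : ℕ) - (j : ℕ)) := by
    refine Finset.sum_congr rfl (fun a ha => ?_)
    simp only [Finset.mem_filter, Finset.mem_univ, true_and] at ha
    refine congrArg (gSymb α) ?_
    show ((((i:ℕ):ℤ)) - (((a:ℕ):ℤ))).natAbs = (i : ℕ) - (a : ℕ)
    omega
  rw [step1]
  refine Finset.sum_nbij' (i := fun j : Fin n => (i : ℕ) - (j : ℕ) - 1)
    (j := fun k => (⟨(i : ℕ) - k - 1, by have := i.isLt; omega⟩ : Fin n)) ?_ ?_ ?_ ?_ ?_
  · intro a ha
    simp only [Finset.mem_filter, Finset.mem_univ, true_and] at ha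
    simp only [Finset.mem_range]; omega
  · intro k hk
    simp only [Finset.mem_range] at hk
    simp only [Finset.mem_filter, Finset.mem_univ, true_and]
    show (i : ℕ) - k - 1 < (i : ℕ)
    have := i.isLt
    omega
  · intro a ha
    simp only [Finset.mem_filter, Finset.mem_univ, true_and] at ha
    apply Fin.ext
    show (i : ℕ) - ((i : ℕ) - (a : ℕ) - 1) - 1 = (a : ℕ)
    have := i.isLt
    have := a.isLt
    omega
  · intro k hk
    simp only [Finset.mem_range] at hk
    show (i : ℕ) - ((i : ℕ) - k - 1) - 1 = k
    have := i.isLt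
    omega
  · intro a ha
    simp only [Finset.mem_filter, Finset.mem_univ, true_and] at ha
    show gSymb α ((i : ℕ) - (a : ℕ)) = gSymb α ((i : ℕ) - (a : ℕ) - 1 + 1)
    exact congrArg (gSymb α) (by omega)

lemma row_right (α : ℝ) (n : ℕ) (i : Fin n) :
    ∑ j ∈ Finset.univ.filter (fun j : Fin n => (i : ℕ) < (j : ℕ)),
      gSymb α (((i : ℤ) - (j : ℤ)).natAbs) = T α (n - 1 - (i : ℕ)) := by
  rw [T]
  have step1 : ∑ j ∈ Finset.univ.filter (fun j : Fin n => (i : ℕ) < (j : ℕ)),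
      gSymb α (((i : ℤ) - (j : ℤ)).natAbs)
      = ∑ j ∈ Finset.univ.filter (fun j : Fin n => (i : ℕ) < (j : ℕ)),
      gSymb α ((j : ℕ) - (i : ℕ)) := by
    refine Finset.sum_congr rfl (fun a ha => ?_)
    simp only [Finset.mem_filter, Finset.mem_univ, true_and] at ha
    refine congrArg (gSymb α) ?_
    show ((((i:ℕ):ℤ)) - (((a:ℕ):ℤ))).natAbs = (a : ℕ) - (i : ℕ)
    omega
  rw [step1]
  refine Finset.sum_nbij' (i := fun j : Fin n => (j : ℕ) - (i : ℕ) - 1)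
    (j := fun k => (⟨min ((i : ℕ) + k + 1) (n - 1), by have := i.isLt; omega⟩ : Fin n)) ?_ ?_ ?_ ?_ ?_
  · intro a ha
    simp only [Finset.mem_filter, Finset.mem_univ, true_and] at ha
    simp only [Finset.mem_range]
    have := a.isLt
    omega
  · intro k hk
    simp only [Finset.mem_range] at hk
    simp only [Finset.mem_filter, Finset.mem_univ, true_and]
    show (i : ℕ) < min ((i : ℕ) + k + 1) (n - 1)
    have := i.isLt
    omega
  · intro a ha
    simp only [Finset.mem_filter, Finset.mem_univ, true_and] at ha
    apply Fin.ext
    show min ((i : ℕ) + ((a : ℕ) - (i : ℕ) - 1) + 1) (n - 1) = (a : ℕ)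
    have := a.isLt
    omega
  · intro k hk
    simp only [Finset.mem_range] at hk
    show (min ((i : ℕ) + k + 1) (n - 1)) - (i : ℕ) - 1 = k
    have := i.isLt
    omega
  · intro a ha
    simp only [Finset.mem_filter, Finset.mem_univ, true_and] at ha
    show gSymb α ((a : ℕ) - (i : ℕ)) = gSymb α ((a : ℕ) - (i : ℕ) - 1 + 1)
    exact congrArg (gSymb α) (by omega)

theorem stmt4 (α : ℝ) (hα₁ : 1 < α) (hα₂ : α < 2) (n : ℕ) (hn : 1 ≤ n) :
    (∀ i : Fin n, Gmat α n i i = 2 * g α 1 ∧ Gmat α n i i = -(2 * α) ∧ Gmat α n i i < 0) ∧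
    (∀ i j : Fin n, i ≠ j → 0 ≤ Gmat α n i j) ∧
    (∀ i : Fin n, |Gmat α n i i| = 2 * α ∧
      ∑ j ∈ Finset.univ \ {i}, |Gmat α n i j| < |Gmat α n i i|) := by
  have hdiag : ∀ i : Fin n, Gmat α n i i = -(2 * α) := by
    intro i
    show gSymb α (((i : ℤ) - (i : ℤ)).natAbs) = -(2 * α)
    rw [sub_self]
    show gSymb α 0 = -(2 * α)
    show 2 * g α 1 = -(2 * α)
    rw [g_one]; ring
  have hoff : ∀ i j : Fin n, i ≠ j → 0 ≤ Gmat α n i j := by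
    intro i j hij
    have hne : ((i : ℤ) - (j : ℤ)).natAbs ≠ 0 := by
      intro h
      apply hij
      apply Fin.ext
      have h1 : ((i : ℤ)) = ((i : ℕ) : ℤ) := rfl
      have h2 : ((j : ℤ)) = ((j : ℕ) : ℤ) := rfl
      rw [h1, h2] at h
      omega
    obtain ⟨d, hd⟩ := Nat.exists_eq_succ_of_ne_zero hne
    show 0 ≤ gSymb α (((i : ℤ) - (j : ℤ)).natAbs)
    rw [hd]
    exact gSymb_nonneg α hα₁ hα₂ d
  refine ⟨fun i => ⟨?_, hdiag i, ?_⟩, hoff, fun i => ?_⟩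
  · rw [hdiag i, g_one]; ring
  · rw [hdiag i]; linarith
  have habs : |Gmat α n i i| = 2 * α := by
    rw [hdiag i, abs_neg, abs_of_pos (by linarith)]
  refine ⟨habs, ?_⟩
  rw [habs]
  have hset : (Finset.univ \ {i} : Finset (Fin n)) =
      (Finset.univ.filter (fun j : Fin n => (j : ℕ) < (i : ℕ))) ∪
      (Finset.univ.filter (fun j : Fin n => (i : ℕ) < (j : ℕ))) := by
    ext j
    simp only [Finset.mem_sdiff, Finset.mem_univ, Finset.mem_singleton, true_and,
      Finset.mem_union, Finset.mem_filter, Fin.ext_iff]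
    omega
  have hdisj : Disjoint (Finset.univ.filter (fun j : Fin n => (j : ℕ) < (i : ℕ)))
      (Finset.univ.filter (fun j : Fin n => (i : ℕ) < (j : ℕ))) := by
    rw [Finset.disjoint_left]
    intro a h1 h2
    simp only [Finset.mem_filter, Finset.mem_univ, true_and] at h1 h2
    omega
  have hdrop : ∀ j ∈ (Finset.univ \ {i} : Finset (Fin n)), |Gmat α n i j| = Gmat α n i j := by
    intro j hj
    simp only [Finset.mem_sdiff, Finset.mem_univ, Finset.mem_singleton, true_and] at hj
    exact abs_of_nonneg (hoff i j (Ne.symm hj))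
  rw [Finset.sum_congr rfl hdrop, hset, Finset.sum_union hdisj]
  have hL : ∑ j ∈ Finset.univ.filter (fun j : Fin n => (j : ℕ) < (i : ℕ)),
      Gmat α n i j = T α (i : ℕ) := row_left α n i
  have hR : ∑ j ∈ Finset.univ.filter (fun j : Fin n => (i : ℕ) < (j : ℕ)),
      Gmat α n i j = T α (n - 1 - (i : ℕ)) := row_right α n i
  rw [hL, hR]
  have := T_lt α hα₁ hα₂ (i : ℕ)
  have := T_lt α hα₁ hα₂ (n - 1 - (i : ℕ))
  linarith
end

section
/- Let α_1, α_2 ∈ (1,2), let n_1, n_2 ≥ 1 be integers, and let c_x, c_y > 0. Then the N×N matrix A = c_x (I_{n_2} ⊗ G_{n_1}^{(α_1)}) + c_y (G_{n_2}^{(α_2)} ⊗ I_{n_1}), where N = n_1 n_2, I_k denotes the k×k identity matrix, and ⊗ denotes the Kronecker product, is symmetric negative definite. -/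
lemma g_two (α : ℝ) : g α 2 = α * (α + 1) / 2 - α := by
  show (1 - (α + 1) / (((1:ℕ) : ℝ) + 1)) * g α 1 = _
  rw [g_one]; push_cast; ring

lemma g_pos_s6 (α : ℝ) (h1 : 1 < α) (h2 : α < 2) : ∀ m, 0 < g α (m + 2) := by
  intro m
  induction m with
  | zero =>
      rw [g_two]; nlinarith
  | succ k ih =>
      show 0 < (1 - (α + 1) / (((k + 2 : ℕ) : ℝ) + 1)) * g α (k + 2)
      have hk : (0:ℝ) < ((k + 2 : ℕ) : ℝ) + 1 := by positivity
      have : (α + 1) / (((k + 2 : ℕ) : ℝ) + 1) < 1 := by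
        rw [div_lt_one hk]; push_cast; linarith [Nat.cast_nonneg (α := ℝ) k]
      exact mul_pos (by linarith) ih

lemma key (α : ℝ) : ∀ m : ℕ, α * ∑ l ∈ Finset.range (m + 1), g α l = (α - m) * g α m := by
  intro m
  induction m with
  | zero => simp [g]
  | succ k ih =>
      rw [Finset.sum_range_succ, mul_add, ih]
      have hg : g α (k + 1) = (1 - (α + 1) / ((k : ℝ) + 1)) * g α k := rfl
      have hk : ((k:ℝ) + 1) ≠ 0 := by positivity
      rw [hg]
      push_cast
      field_simp
      ring

lemma T_neg (α : ℝ) (h1 : 1 < α) (h2 : α < 2) (m : ℕ) :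
    ∑ l ∈ Finset.range (m + 2), g α l < 0 := by
  have hα : (0:ℝ) < α := by linarith
  cases m with
  | zero =>
      have : ∑ l ∈ Finset.range 2, g α l = 1 - α := by
        rw [Finset.sum_range_succ, Finset.sum_range_one, g_one]
        show (1:ℝ) + -α = 1 - α
        ring
      rw [show (0:ℕ) + 2 = 2 from rfl, this]; linarith
  | succ k =>
      have hg : 0 < g α (k + 2) := g_pos_s6 α h1 h2 k
      have hc : α - ((k:ℝ) + 2) < 0 := by linarith [Nat.cast_nonneg (α := ℝ) k]
      have hkey := key α (k + 2)
      push_cast at hkey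
      have h2' : α * ∑ l ∈ Finset.range (k + 1 + 2), g α l < 0 := by
        rw [show k + 1 + 2 = k + 2 + 1 from rfl, hkey]
        exact mul_neg_of_neg_of_pos hc hg
      nlinarith [h2']

lemma gSymb_pos (α : ℝ) (h1 : 1 < α) (h2 : α < 2) (d : ℕ) (hd : 1 ≤ d) :
    0 < gSymb α d := by
  match d, hd with
  | 1, _ =>
      show 0 < g α 0 + g α 2
      rw [show g α 0 = 1 from rfl, g_two]
      nlinarith
  | (e + 2), _ =>
      show 0 < g α (e + 3)
      exact g_pos_s6 α h1 h2 (e + 1)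

lemma gSymb_succ_succ (α : ℝ) (d : ℕ) (hd : 1 ≤ d) : gSymb α (d + 1) = g α (d + 2) := by
  match d, hd with
  | (e + 1), _ => rfl

lemma symbSum_id (α : ℝ) : ∀ m, 1 ≤ m →
    ∑ d ∈ Finset.Icc 1 m, gSymb α d = (∑ l ∈ Finset.range (m + 2), g α l) + α := by
  intro m hm
  induction m, hm using Nat.le_induction with
  | base =>
      rw [show Finset.Icc 1 1 = {1} from rfl, Finset.sum_singleton]
      show g α 0 + g α 2 = _
      rw [show (1:ℕ) + 2 = 3 from rfl, Finset.sum_range_succ, Finset.sum_range_succ,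
        Finset.sum_range_one, g_one, show g α 0 = 1 from rfl]
      ring
  | succ m hm ih =>
      rw [Finset.sum_Icc_succ_top (by omega), ih, gSymb_succ_succ α m hm]
      have h3 : ∑ l ∈ Finset.range (m + 1 + 2), g α l
          = ∑ l ∈ Finset.range (m + 2), g α l + g α (m + 2) := Finset.sum_range_succ _ _
      rw [h3]
      ring

lemma symbSum_lt (α : ℝ) (h1 : 1 < α) (h2 : α < 2) (m : ℕ) :
    ∑ d ∈ Finset.Icc 1 m, gSymb α d < α := by
  rcases Nat.eq_zero_or_pos m with hm | hm
  · subst hm; simp; linarith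
  · rw [symbSum_id α m hm]
    have := T_neg α h1 h2 m
    linarith

lemma Gmat_symm (α : ℝ) (n : ℕ) (i j : Fin n) : Gmat α n i j = Gmat α n j i := by
  show gSymb α _ = gSymb α _
  congr 1
  omega

lemma Gmat_diag (α : ℝ) (n : ℕ) (i : Fin n) : Gmat α n i i = -(2 * α) := by
  show gSymb α (((i:ℤ) - (i:ℤ)).natAbs) = _
  rw [sub_self]
  show 2 * g α 1 = _
  rw [g_one]; ring

lemma side_bound (α : ℝ) (h1 : 1 < α) (h2 : α < 2) (n : ℕ) (i : Fin n)
    (s : Finset (Fin n)) (hs : ∀ j ∈ s, j ≠ i)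
    (hinj : ∀ j ∈ s, ∀ j' ∈ s,
      (((i:ℤ) - (j:ℤ)).natAbs = ((i:ℤ) - (j':ℤ)).natAbs) → j = j') :
    ∑ j ∈ s, gSymb α (((i:ℤ) - (j:ℤ)).natAbs) ≤ ∑ d ∈ Finset.Icc 1 (n-1), gSymb α d := by
  have himg : ∑ d ∈ s.image (fun j : Fin n => ((i:ℤ) - (j:ℤ)).natAbs), gSymb α d
      = ∑ j ∈ s, gSymb α (((i:ℤ) - (j:ℤ)).natAbs) := Finset.sum_image hinj
  rw [← himg]
  apply Finset.sum_le_sum_of_subset_of_nonneg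
  · intro d hd
    simp only [Finset.mem_image] at hd
    obtain ⟨j, hj, rfl⟩ := hd
    have hne : j ≠ i := hs j hj
    have : (j:ℕ) ≠ (i:ℕ) := fun h => hne (Fin.ext h)
    have hi := i.isLt
    have hj2 := j.isLt
    simp only [Finset.mem_Icc]
    omega
  · intro d hd _
    have : 1 ≤ d := by
      simp only [Finset.mem_Icc] at hd; exact hd.1
    exact le_of_lt (gSymb_pos α h1 h2 d this)

lemma Gmat_dom (α : ℝ) (h1 : 1 < α) (h2 : α < 2) (n : ℕ) (i : Fin n) :
    ∑ j, |Gmat α n i j| < -(2 * Gmat α n i i) := by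
  have hdiag : Gmat α n i i = -(2*α) := Gmat_diag α n i
  have hsplit : (Finset.univ : Finset (Fin n)).erase i = Finset.Iio i ∪ Finset.Ioi i := by
    ext j
    simp only [Finset.mem_erase, Finset.mem_univ, and_true, Finset.mem_union,
      Finset.mem_Iio, Finset.mem_Ioi]
    exact ⟨fun h => h.lt_or_gt, fun h => h.elim ne_of_lt ne_of_gt⟩
  have hdisj : Disjoint (Finset.Iio i) (Finset.Ioi i) := by
    apply Finset.disjoint_left.2
    intro j hj hj'
    simp only [Finset.mem_Iio] at hj
    simp only [Finset.mem_Ioi] at hj'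
    exact absurd hj (not_lt.2 hj'.le)
  have habs : ∀ j ∈ (Finset.univ : Finset (Fin n)).erase i,
      |Gmat α n i j| = gSymb α (((i:ℤ) - (j:ℤ)).natAbs) := by
    intro j hj
    have hne : j ≠ i := (Finset.mem_erase.1 hj).1
    have hd : 1 ≤ (((i:ℤ) - (j:ℤ)).natAbs) := by
      have : (j:ℕ) ≠ (i:ℕ) := fun h => hne (Fin.ext h)
      omega
    exact abs_of_pos (gSymb_pos α h1 h2 _ hd)
  have hIio : ∑ j ∈ Finset.Iio i, gSymb α (((i:ℤ) - (j:ℤ)).natAbs)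
      ≤ ∑ d ∈ Finset.Icc 1 (n-1), gSymb α d := by
    apply side_bound α h1 h2 n i
    · intro j hj
      simp only [Finset.mem_Iio] at hj
      exact ne_of_lt hj
    · intro j hj j' hj' h
      simp only [Finset.mem_Iio] at hj hj'
      have h1' : (j:ℕ) < (i:ℕ) := hj
      have h2' : (j':ℕ) < (i:ℕ) := hj'
      apply Fin.ext
      omega
  have hIoi : ∑ j ∈ Finset.Ioi i, gSymb α (((i:ℤ) - (j:ℤ)).natAbs)
      ≤ ∑ d ∈ Finset.Icc 1 (n-1), gSymb α d := by
    apply side_bound α h1 h2 n i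
    · intro j hj
      simp only [Finset.mem_Ioi] at hj
      exact ne_of_gt hj
    · intro j hj j' hj' h
      simp only [Finset.mem_Ioi] at hj hj'
      have h1' : (i:ℕ) < (j:ℕ) := hj
      have h2' : (i:ℕ) < (j':ℕ) := hj'
      apply Fin.ext
      omega
  have hsum : ∑ j, |Gmat α n i j|
      = |Gmat α n i i| + ∑ j ∈ (Finset.univ : Finset (Fin n)).erase i, |Gmat α n i j| :=
    (Finset.add_sum_erase _ _ (Finset.mem_univ i)).symm
  have hErase : ∑ j ∈ (Finset.univ : Finset (Fin n)).erase i, |Gmat α n i j|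
      = ∑ j ∈ Finset.Iio i, gSymb α (((i:ℤ) - (j:ℤ)).natAbs)
        + ∑ j ∈ Finset.Ioi i, gSymb α (((i:ℤ) - (j:ℤ)).natAbs) := by
    rw [Finset.sum_congr rfl habs, hsplit, Finset.sum_union hdisj]
  have hsymb := symbSum_lt α h1 h2 (n-1)
  have hαpos : (0:ℝ) < α := by linarith
  have habsdiag : |Gmat α n i i| = 2 * α := by
    rw [hdiag, abs_neg, abs_of_pos (by linarith)]
  rw [hsum, hErase, habsdiag, hdiag]
  linarith


open Matrix Kronecker

/-- `A = c_x (I_{n₂} ⊗ G_{n₁}^{(α₁)}) + c_y (G_{n₂}^{(α₂)} ⊗ I_{n₁})`. -/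
noncomputable def Amat (α₁ α₂ : ℝ) (n₁ n₂ : ℕ) (cx cy : ℝ) :
    Matrix (Fin n₂ × Fin n₁) (Fin n₂ × Fin n₁) ℝ :=
  cx • ((1 : Matrix (Fin n₂) (Fin n₂) ℝ) ⊗ₖ Gmat α₁ n₁) +
    cy • (Gmat α₂ n₂ ⊗ₖ (1 : Matrix (Fin n₁) (Fin n₁) ℝ))

lemma negdef_of_dom {ι : Type*} [Fintype ι] [DecidableEq ι] (A : Matrix ι ι ℝ)
    (hsym : ∀ i j, A i j = A j i) (hd : ∀ i, ∑ j, |A i j| < -(2 * A i i)) :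
    ∀ x : ι → ℝ, x ≠ 0 → x ⬝ᵥ (A *ᵥ x) < 0 := by
  intro x hx
  have hdiagneg : ∀ i, A i i < 0 := by
    intro i
    by_contra h
    push_neg at h
    have h1 : |A i i| ≤ ∑ j, |A i j| :=
      Finset.single_le_sum (f := fun j => |A i j|) (fun j _ => abs_nonneg _)
        (Finset.mem_univ i)
    rw [abs_of_nonneg h] at h1
    linarith [hd i]
  have hQ : x ⬝ᵥ (A *ᵥ x) = ∑ i, ∑ j, x i * (A i j * x j) := by
    unfold dotProduct mulVec dotProduct
    exact Finset.sum_congr rfl fun i _ => Finset.mul_sum _ _ _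
  have hbound : ∀ i j, x i * (A i j * x j) ≤
      (if j = i then A i i * x i ^ 2 else 0)
      + (if j = i then 0 else |A i j| * x i ^ 2 / 2)
      + (if j = i then 0 else |A i j| * x j ^ 2 / 2) := by
    intro i j
    by_cases h : j = i
    · subst h
      simp
      apply le_of_eq; ring
    · simp only [if_neg h, zero_add]
      nlinarith [mul_nonneg (sub_nonneg.2 (le_abs_self (A i j))) (sq_nonneg (x i + x j)),
        mul_nonneg (by linarith [neg_abs_le (A i j)] : (0:ℝ) ≤ |A i j| + A i j)
          (sq_nonneg (x i - x j))]
  have erase_sum : ∀ (c : ι → ℝ) (i : ι),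
      ∑ j, (if j = i then 0 else c j) = (∑ j, c j) - c i := by
    intro c i
    rw [← Finset.sum_erase_add _ _ (Finset.mem_univ i), if_pos rfl, add_zero,
      Finset.sum_congr rfl (fun j hj => if_neg (Finset.mem_erase.1 hj).1),
      Finset.sum_erase_eq_sub (Finset.mem_univ i)]
  have hQle : x ⬝ᵥ (A *ᵥ x) ≤ ∑ i, ((∑ j, |A i j|) + 2 * A i i) * x i ^ 2 := by
    rw [hQ]
    calc ∑ i, ∑ j, x i * (A i j * x j)
        ≤ ∑ i, ∑ j, ((if j = i then A i i * x i ^ 2 else 0)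
            + (if j = i then 0 else |A i j| * x i ^ 2 / 2)
            + (if j = i then 0 else |A i j| * x j ^ 2 / 2)) :=
          Finset.sum_le_sum fun i _ => Finset.sum_le_sum fun j _ => hbound i j
      _ = ∑ i, ((∑ j, (if j = i then A i i * x i ^ 2 else 0))
            + (∑ j, (if j = i then 0 else |A i j| * x i ^ 2 / 2))
            + (∑ j, (if j = i then 0 else |A i j| * x j ^ 2 / 2))) := by
          simp [Finset.sum_add_distrib]
      _ = (∑ i, ∑ j, (if j = i then A i i * x i ^ 2 else 0))
            + (∑ i, ∑ j, (if j = i then 0 else |A i j| * x i ^ 2 / 2))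
            + (∑ i, ∑ j, (if j = i then 0 else |A i j| * x j ^ 2 / 2)) := by
          simp [Finset.sum_add_distrib]
      _ = ∑ i, ((∑ j, |A i j|) + 2 * A i i) * x i ^ 2 := by
          have c3 : (∑ i, ∑ j, (if j = i then (0:ℝ) else |A i j| * x j ^ 2 / 2))
              = ∑ i, ∑ j, (if j = i then 0 else |A i j| * x i ^ 2 / 2) := by
            rw [Finset.sum_comm]
            apply Finset.sum_congr rfl
            intro i _
            apply Finset.sum_congr rfl
            intro j _
            by_cases h : j = i
            · subst h; simp
            · rw [if_neg h, if_neg (fun h' => h h'.symm), hsym j i]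
          rw [c3]
          have c1 : ∀ i, ∑ j, (if j = i then A i i * x i ^ 2 else (0:ℝ))
              = A i i * x i ^ 2 := by intro i; simp
          have c2 : ∀ i, ∑ j, (if j = i then (0:ℝ) else |A i j| * x i ^ 2 / 2)
              = ((∑ j, |A i j|) - |A i i|) * x i ^ 2 / 2 := by
            intro i
            have := erase_sum (fun j => |A i j| * x i ^ 2 / 2) i
            rw [this, ← Finset.sum_div, ← Finset.sum_mul]
            ring
          simp only [c1, c2]
          rw [← Finset.sum_add_distrib, ← Finset.sum_add_distrib]
          apply Finset.sum_congr rfl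
          intro i _
          rw [abs_of_neg (hdiagneg i)]
          ring
  have hcoef : ∀ i, ((∑ j, |A i j|) + 2 * A i i) < 0 := fun i => by linarith [hd i]
  obtain ⟨i0, hi0⟩ : ∃ i, x i ≠ 0 := Function.ne_iff.1 hx
  have hlt : ∑ i, ((∑ j, |A i j|) + 2 * A i i) * x i ^ 2 < 0 := by
    have := Finset.sum_lt_sum (f := fun i => ((∑ j, |A i j|) + 2 * A i i) * x i ^ 2)
      (g := fun _ => (0:ℝ))
      (fun i _ => mul_nonpos_of_nonpos_of_nonneg (le_of_lt (hcoef i)) (sq_nonneg _))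
      ⟨i0, Finset.mem_univ i0,
        mul_neg_of_neg_of_pos (hcoef i0) (by positivity)⟩
    simpa using this
  linarith

lemma Amat_apply (α₁ α₂ : ℝ) (n₁ n₂ : ℕ) (cx cy : ℝ) (i i' : Fin n₂) (j j' : Fin n₁) :
    Amat α₁ α₂ n₁ n₂ cx cy (i, j) (i', j')
      = cx * ((if i = i' then (1:ℝ) else 0) * Gmat α₁ n₁ j j')
        + cy * (Gmat α₂ n₂ i i' * (if j = j' then (1:ℝ) else 0)) := by
  simp [Amat, Matrix.add_apply, Matrix.smul_apply, Matrix.kroneckerMap_apply,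
    Matrix.one_apply, smul_eq_mul]

lemma Amat_symm (α₁ α₂ : ℝ) (n₁ n₂ : ℕ) (cx cy : ℝ) (p q : Fin n₂ × Fin n₁) :
    Amat α₁ α₂ n₁ n₂ cx cy p q = Amat α₁ α₂ n₁ n₂ cx cy q p := by
  obtain ⟨i, j⟩ := p
  obtain ⟨i', j'⟩ := q
  rw [Amat_apply, Amat_apply, Gmat_symm α₁ n₁ j j', Gmat_symm α₂ n₂ i i']
  by_cases h1 : i = i' <;> by_cases h2 : j = j' <;>
    simp [h1, h2, Ne.symm, eq_comm]

lemma Amat_rowsum (α₁ α₂ : ℝ) (h₁ : 1 < α₁) (h₁' : α₁ < 2) (h₂ : 1 < α₂) (h₂' : α₂ < 2)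
    (n₁ n₂ : ℕ) (cx cy : ℝ) (hcx : 0 < cx) (hcy : 0 < cy) (i : Fin n₂) (j : Fin n₁) :
    ∑ p : Fin n₂ × Fin n₁, |Amat α₁ α₂ n₁ n₂ cx cy (i, j) p|
      = cx * (∑ j', |Gmat α₁ n₁ j j'|) + cy * (∑ i', |Gmat α₂ n₂ i i'|) := by
  have hG1 : Gmat α₁ n₁ j j < 0 := by rw [Gmat_diag]; linarith
  have hG2 : Gmat α₂ n₂ i i < 0 := by rw [Gmat_diag]; linarith
  rw [Fintype.sum_prod_type]
  have inner_ne : ∀ i' : Fin n₂, i' ≠ i →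
      ∑ j' : Fin n₁, |Amat α₁ α₂ n₁ n₂ cx cy (i, j) (i', j')| = cy * |Gmat α₂ n₂ i i'| := by
    intro i' hi'
    have : ∀ j' : Fin n₁, |Amat α₁ α₂ n₁ n₂ cx cy (i, j) (i', j')|
        = if j = j' then cy * |Gmat α₂ n₂ i i'| else 0 := by
      intro j'
      rw [Amat_apply, if_neg (fun h => hi' h.symm)]
      by_cases h : j = j' <;>
        simp [h, abs_mul, abs_of_pos hcy]
    rw [Finset.sum_congr rfl (fun j' _ => this j'), Finset.sum_ite_eq _ j _]
    simp
  have inner_eq : ∑ j' : Fin n₁, |Amat α₁ α₂ n₁ n₂ cx cy (i, j) (i, j')|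
      = cx * (∑ j', |Gmat α₁ n₁ j j'|) + cy * |Gmat α₂ n₂ i i| := by
    have hterm : ∀ j' : Fin n₁, j' ≠ j →
        |Amat α₁ α₂ n₁ n₂ cx cy (i, j) (i, j')| = cx * |Gmat α₁ n₁ j j'| := by
      intro j' hj'
      rw [Amat_apply, if_pos rfl, if_neg (fun h => hj' h.symm)]
      simp [abs_mul, abs_of_pos hcx]
    have hdiagterm : |Amat α₁ α₂ n₁ n₂ cx cy (i, j) (i, j)|
        = cx * |Gmat α₁ n₁ j j| + cy * |Gmat α₂ n₂ i i| := by
      rw [Amat_apply, if_pos rfl, if_pos rfl]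
      rw [abs_of_neg (by nlinarith), abs_of_neg hG1, abs_of_neg hG2]
      ring
    rw [← Finset.add_sum_erase _ _ (Finset.mem_univ (i, j).2), hdiagterm,
      Finset.sum_congr rfl (fun j' hj' => hterm j' (Finset.mem_erase.1 hj').1),
      ← Finset.mul_sum, Finset.sum_erase_eq_sub (Finset.mem_univ j)]
    have : |Gmat α₁ n₁ j j| = -(Gmat α₁ n₁ j j) := abs_of_neg hG1
    rw [this]
    ring
  rw [← Finset.add_sum_erase _ _ (Finset.mem_univ i), inner_eq,
    Finset.sum_congr rfl (fun i' hi' => inner_ne i' (Finset.mem_erase.1 hi').1),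
    ← Finset.mul_sum, Finset.sum_erase_eq_sub (Finset.mem_univ i)]
  ring

theorem stmt6 (α₁ α₂ : ℝ) (hα₁ : 1 < α₁ ∧ α₁ < 2) (hα₂ : 1 < α₂ ∧ α₂ < 2)
    (n₁ n₂ : ℕ) (hn₁ : 1 ≤ n₁) (hn₂ : 1 ≤ n₂) (cx cy : ℝ) (hcx : 0 < cx) (hcy : 0 < cy) :
    (Amat α₁ α₂ n₁ n₂ cx cy).IsSymm ∧
      ∀ x : Fin n₂ × Fin n₁ → ℝ, x ≠ 0 → x ⬝ᵥ (Amat α₁ α₂ n₁ n₂ cx cy *ᵥ x) < 0 := by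
  obtain ⟨h₁, h₁'⟩ := hα₁
  obtain ⟨h₂, h₂'⟩ := hα₂
  constructor
  · ext p q
    rw [Matrix.transpose_apply]
    exact Amat_symm α₁ α₂ n₁ n₂ cx cy q p
  · apply negdef_of_dom
    · exact Amat_symm α₁ α₂ n₁ n₂ cx cy
    · rintro ⟨i, j⟩
      rw [Amat_rowsum α₁ α₂ h₁ h₁' h₂ h₂' n₁ n₂ cx cy hcx hcy i j,
        Amat_apply, if_pos rfl, if_pos rfl, mul_one, one_mul]
      have d1 := Gmat_dom α₁ h₁ h₁' n₁ j
      have d2 := Gmat_dom α₂ h₂ h₂' n₂ i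
      nlinarith
end

section
/- Let M be an N×N real matrix satisfying ∑_{j ≠ i} |[M]_{ij}| ≤ [M]_{ii} - 1 for every i. Let Δt > 0, c_2 ≥ 0, T > 0, and let m be a positive integer with m·Δt = T. Suppose vectors ε^0, ε^1, …, ε^m ∈ ℝ^N and γ^0, …, γ^{m-1} ∈ ℝ^N satisfy M ε^k = ε^{k-1} + Δt γ^{k-1} and ‖γ^{k-1}‖_∞ ≤ c_2 ‖ε^{k-1}‖_∞ for all 1 ≤ k ≤ m. Then ‖ε^k‖_∞ ≤ (1 + Δt c_2)^k ‖ε^0‖_∞ ≤ e^{c_2 T} ‖ε^0‖_∞ for all 0 ≤ k ≤ m. -/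
open Matrix Finset in
lemma stmt9_key {N : ℕ} (M : Matrix (Fin N) (Fin N) ℝ)
    (hM : ∀ i : Fin N, ∑ j ∈ Finset.univ \ {i}, |M i j| ≤ M i i - 1)
    (v : Fin N → ℝ) : ‖v‖ ≤ ‖M *ᵥ v‖ := by
  rcases Nat.eq_zero_or_pos N with h | h
  · subst h
    have : v = 0 := funext fun i => absurd i.2 (by omega)
    simp [this]
  obtain ⟨i, -, hi⟩ := Finset.exists_max_image Finset.univ (fun j => |v j|)
    ⟨⟨0, h⟩, Finset.mem_univ _⟩
  have hnorm : ‖v‖ = |v i| := by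
    refine le_antisymm ?_ ?_
    · exact (pi_norm_le_iff_of_nonneg (abs_nonneg _)).2 fun j => hi j (Finset.mem_univ _)
    · exact norm_le_pi_norm v i
  have hMii : 1 ≤ M i i := by
    have h0 : (0:ℝ) ≤ ∑ j ∈ Finset.univ \ {i}, |M i j| :=
      Finset.sum_nonneg fun j _ => abs_nonneg _
    linarith [hM i]
  set a : ℝ := ∑ j ∈ Finset.univ \ {i}, M i j * v j with ha
  have hsum : (M *ᵥ v) i = a + M i i * v i := by
    rw [mulVec, dotProduct, ha, ← Finset.sum_eq_sum_sdiff_singleton_add (Finset.mem_univ i)]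
  have habs : |a| ≤ (M i i - 1) * |v i| := by
    calc |a| ≤ ∑ j ∈ Finset.univ \ {i}, |M i j * v j| := Finset.abs_sum_le_sum_abs _ _
    _ ≤ ∑ j ∈ Finset.univ \ {i}, |M i j| * |v i| := by
        refine Finset.sum_le_sum fun j _ => ?_
        rw [abs_mul]
        exact mul_le_mul_of_nonneg_left (hi j (Finset.mem_univ _)) (abs_nonneg _)
    _ = (∑ j ∈ Finset.univ \ {i}, |M i j|) * |v i| := (Finset.sum_mul ..).symm
    _ ≤ (M i i - 1) * |v i| := mul_le_mul_of_nonneg_right (hM i) (abs_nonneg _)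
  have h1 : |M i i * v i| - |a| ≤ |(M *ᵥ v) i| := by
    rw [hsum]
    have e : |M i i * v i| = |(a + M i i * v i) + (-a)| := by ring_nf
    have := abs_add_le (a + M i i * v i) (-a)
    rw [abs_neg] at this
    linarith [e ▸ this]
  have h2 : |M i i * v i| = M i i * |v i| := by
    rw [abs_mul, abs_of_nonneg (by linarith : (0:ℝ) ≤ M i i)]
  have h3 : |v i| ≤ |(M *ᵥ v) i| := by
    rw [h2] at h1; linarith
  calc ‖v‖ = |v i| := hnorm
  _ ≤ |(M *ᵥ v) i| := h3
  _ ≤ ‖M *ᵥ v‖ := norm_le_pi_norm (M *ᵥ v) i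

open Matrix in
theorem stmt9 (N : ℕ) (M : Matrix (Fin N) (Fin N) ℝ)
    (hM : ∀ i : Fin N, ∑ j ∈ Finset.univ \ {i}, |M i j| ≤ M i i - 1)
    (Δt : ℝ) (hΔt : 0 < Δt) (c₂ : ℝ) (hc₂ : 0 ≤ c₂) (T : ℝ) (hT : 0 < T)
    (m : ℕ) (hm : 1 ≤ m) (hmT : (m : ℝ) * Δt = T)
    (ε γ : ℕ → Fin N → ℝ)
    (hεγ : ∀ k : ℕ, 1 ≤ k → k ≤ m → M *ᵥ ε k = ε (k - 1) + Δt • γ (k - 1))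
    (hγ : ∀ k : ℕ, 1 ≤ k → k ≤ m → ‖γ (k - 1)‖ ≤ c₂ * ‖ε (k - 1)‖) :
    ∀ k : ℕ, k ≤ m →
      ‖ε k‖ ≤ (1 + Δt * c₂) ^ k * ‖ε 0‖ ∧
      (1 + Δt * c₂) ^ k * ‖ε 0‖ ≤ Real.exp (c₂ * T) * ‖ε 0‖ := by
  have hbase : (0:ℝ) ≤ 1 + Δt * c₂ := by positivity
  have hmain : ∀ k : ℕ, k ≤ m → ‖ε k‖ ≤ (1 + Δt * c₂) ^ k * ‖ε 0‖ := by
    intro k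
    induction k with
    | zero => intro _; simp
    | succ n ih =>
      intro hkm
      have hn : n ≤ m := Nat.le_of_succ_le hkm
      have ih' := ih hn
      have h1 : ‖ε (n + 1)‖ ≤ (1 + Δt * c₂) * ‖ε n‖ := by
        calc ‖ε (n + 1)‖ ≤ ‖M *ᵥ ε (n + 1)‖ := stmt9_key M hM _
        _ = ‖ε n + Δt • γ n‖ := by rw [hεγ (n+1) (Nat.le_add_left 1 n) hkm]; simp
        _ ≤ ‖ε n‖ + Δt * ‖γ n‖ := by
            refine (norm_add_le _ _).trans ?_
            rw [norm_smul, Real.norm_eq_abs, abs_of_pos hΔt]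
        _ ≤ ‖ε n‖ + Δt * (c₂ * ‖ε n‖) := by
            have := hγ (n+1) (Nat.le_add_left 1 n) hkm
            simp only [Nat.add_sub_cancel] at this
            nlinarith
        _ = (1 + Δt * c₂) * ‖ε n‖ := by ring
      calc ‖ε (n + 1)‖ ≤ (1 + Δt * c₂) * ‖ε n‖ := h1
      _ ≤ (1 + Δt * c₂) * ((1 + Δt * c₂) ^ n * ‖ε 0‖) :=
          mul_le_mul_of_nonneg_left ih' hbase
      _ = (1 + Δt * c₂) ^ (n + 1) * ‖ε 0‖ := by ring
  intro k hk
  refine ⟨hmain k hk, ?_⟩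
  refine mul_le_mul_of_nonneg_right ?_ (norm_nonneg _)
  calc (1 + Δt * c₂) ^ k ≤ Real.exp (Δt * c₂) ^ k :=
      pow_le_pow_left₀ hbase (Real.add_one_le_exp _ |>.trans_eq' (by ring)) k
  _ = Real.exp (k * (Δt * c₂)) := by rw [← Real.exp_nat_mul]
  _ ≤ Real.exp (c₂ * T) := by
      apply Real.exp_le_exp.2
      rw [← hmT]
      have h5 : (k:ℝ) ≤ m := Nat.cast_le.2 hk
      have h4 : (k:ℝ) * (Δt * c₂) ≤ (m:ℝ) * (Δt * c₂) :=
        mul_le_mul_of_nonneg_right h5 (by positivity)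
      have h6 : c₂ * ((m:ℝ) * Δt) = (m:ℝ) * (Δt * c₂) := by ring
      linarith
end

section
/- Let B be an N×N real symmetric matrix such that I_N - B is positive definite, let s > 0, and let Φ be an N×N diagonal matrix whose diagonal entries all lie in {0, 1}. Then the matrix Q = (I_N - Φ)(I_N - B)^{-1} + Φ((1+s)I_N - B)^{-1} is invertible; in fact Q · (I_N - B) · ((1+s)I_N - B) = I_N - B + s(I_N - Φ), which is symmetric positive definite. -/
open Matrix in
theorem stmt15 (N : ℕ) (B : Matrix (Fin N) (Fin N) ℝ) (hBsymm : B.IsSymm)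
    (hB : ((1 : Matrix (Fin N) (Fin N) ℝ) - B).PosDef)
    (s : ℝ) (hs : 0 < s)
    (φ : Fin N → ℝ) (hφ : ∀ i, φ i = 0 ∨ φ i = 1)
    (Φ Q : Matrix (Fin N) (Fin N) ℝ) (hΦ : Φ = Matrix.diagonal φ)
    (hQ : Q = (1 - Φ) * (1 - B)⁻¹ + Φ * ((1 + s) • (1 : Matrix (Fin N) (Fin N) ℝ) - B)⁻¹) :
    IsUnit Q ∧
      Q * ((1 - B) * ((1 + s) • (1 : Matrix (Fin N) (Fin N) ℝ) - B)) = 1 - B + s • (1 - Φ) ∧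
      ((1 : Matrix (Fin N) (Fin N) ℝ) - B + s • (1 - Φ)).PosDef := by
  set A1 : Matrix (Fin N) (Fin N) ℝ := 1 - B with hA1
  set A2 : Matrix (Fin N) (Fin N) ℝ := (1 + s) • (1 : Matrix (Fin N) (Fin N) ℝ) - B with hA2
  -- A2 = A1 + s • 1
  have hA2eq : A2 = A1 + s • (1 : Matrix (Fin N) (Fin N) ℝ) := by
    rw [hA1, hA2]
    module
  have hsone : (s • (1 : Matrix (Fin N) (Fin N) ℝ)).PosDef := by
    rw [Matrix.smul_one_eq_diagonal]
    exact Matrix.posDef_diagonal_iff.mpr fun _ => hs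
  have hA2pd : A2.PosDef := by
    rw [hA2eq]
    exact hB.add_posSemidef hsone.posSemidef
  -- commutation of A1 and A2
  have hcomm : A1 * A2 = A2 * A1 := by
    rw [hA1, hA2]
    simp only [Matrix.sub_mul, Matrix.mul_sub, Matrix.smul_mul, Matrix.mul_smul,
      Matrix.one_mul, Matrix.mul_one]
    module
  have hA1inv : A1⁻¹ * A1 = 1 := Matrix.nonsing_inv_mul _ hB.det_pos.ne'.isUnit
  have hA2inv : A2⁻¹ * A2 = 1 := Matrix.nonsing_inv_mul _ hA2pd.det_pos.ne'.isUnit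
  -- the key identity
  have hkey : Q * (A1 * A2) = A1 + s • ((1 : Matrix (Fin N) (Fin N) ℝ) - Φ) := by
    rw [hQ, Matrix.add_mul]
    have h1 : (1 - Φ) * A1⁻¹ * (A1 * A2) = (1 - Φ) * A2 := by
      rw [Matrix.mul_assoc, ← Matrix.mul_assoc A1⁻¹, hA1inv, Matrix.one_mul]
    have h2 : Φ * A2⁻¹ * (A1 * A2) = Φ * A1 := by
      rw [hcomm, Matrix.mul_assoc, ← Matrix.mul_assoc A2⁻¹, hA2inv, Matrix.one_mul]
    rw [h1, h2, hA2eq]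
    noncomm_ring
  -- PosDef of the RHS
  have hdiagΦ : (s • ((1 : Matrix (Fin N) (Fin N) ℝ) - Φ)).PosSemidef := by
    rw [hΦ, ← Matrix.diagonal_one, Matrix.diagonal_sub, ← Matrix.diagonal_smul]
    refine Matrix.posSemidef_diagonal_iff.mpr fun i => ?_
    rcases hφ i with h | h <;> simp [h, hs.le]
  have hRHSpd : (A1 + s • ((1 : Matrix (Fin N) (Fin N) ℝ) - Φ)).PosDef :=
    hB.add_posSemidef hdiagΦ
  refine ⟨?_, hkey, hRHSpd⟩
  -- IsUnit Q
  have : Q = (A1 + s • ((1 : Matrix (Fin N) (Fin N) ℝ) - Φ)) * (A1 * A2)⁻¹ := by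
    have hu : IsUnit (A1 * A2) := hB.isUnit.mul hA2pd.isUnit
    rw [← hkey, Matrix.mul_assoc, Matrix.mul_nonsing_inv _ ((Matrix.isUnit_iff_isUnit_det _).mp hu), Matrix.mul_one]
  rw [this]
  exact hRHSpd.isUnit.mul ((Matrix.isUnit_iff_isUnit_det _).mpr
    (Matrix.isUnit_nonsing_inv_det _ ((Matrix.isUnit_iff_isUnit_det _).mp
      (hB.isUnit.mul hA2pd.isUnit))))
end

section
/- Let A and B be N×N real symmetric matrices that are both negative definite and satisfy 1/2 ≤ (x^T A x)/(x^T B x) ≤ 3/2 for every nonzero x ∈ ℝ^N. Let D be an N×N diagonal matrix with nonnegative diagonal entries, and set M = I_N - A + D and P = I_N - B + D. Then P is symmetric positive definite, and every eigenvalue λ of P^{-1} M is real and satisfies 1/2 < λ < 3/2. -/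
/-!
The Rayleigh bounds on `A` against `B`, together with `‖x‖² > 0` and `xᵀ D x ≥ 0`, make both
`M - ½ P` and `³⁄₂ P - M` positive definite, hence so is their sum `P`. If `P⁻¹ M z = μ z`, then
`z* M z = μ z* P z`, and the positivity of `z* (M - ½ P) z = (μ - ½) z* P z` and
`z* (³⁄₂ P - M) z = (³⁄₂ - μ) z* P z` forces `½ < μ < ³⁄₂`, with `μ` real.
-/

open Matrix ComplexOrder

namespace Matrix

variable {n : Type*} [Fintype n]

theorem star_dotProduct_map_ofReal_mulVec {M : Matrix n n ℝ} (hM : M.IsSymm) (z : n → ℂ) :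
    star z ⬝ᵥ (M.map (↑) *ᵥ z) =
      (((fun i ↦ (z i).re) ⬝ᵥ (M *ᵥ fun i ↦ (z i).re) +
        (fun i ↦ (z i).im) ⬝ᵥ (M *ᵥ fun i ↦ (z i).im) : ℝ) : ℂ) := by
  apply Complex.ext
  · simp [dotProduct, mulVec, Finset.mul_sum, Complex.mul_re, Finset.sum_add_distrib]
  · simp only [dotProduct, Pi.star_apply, RCLike.star_def, mulVec, map_apply, Finset.mul_sum,
      Complex.im_sum, Complex.mul_im, Complex.conj_re, Complex.ofReal_re, Complex.ofReal_im,
      zero_mul, add_zero, Complex.conj_im, Complex.mul_re, sub_zero, neg_mul,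
      Finset.sum_add_distrib, Finset.sum_neg_distrib, Complex.ofReal_add, Complex.ofReal_sum,
      Complex.ofReal_mul, Complex.add_im, mul_zero, Finset.sum_const_zero]
    rw [Finset.sum_comm, add_neg_eq_zero]
    refine Finset.sum_congr rfl fun i _ ↦ Finset.sum_congr rfl fun j _ ↦ ?_
    rw [hM.apply i j]
    ring

theorem PosDef.map_ofReal {M : Matrix n n ℝ} (hM : M.PosDef) :
    (M.map ((↑) : ℝ → ℂ)).PosDef := by
  have hsymm : M.IsSymm := by simpa using hM.isHermitian
  refine .of_dotProduct_mulVec_pos (hM.isHermitian.map _ fun _ ↦ by simp) fun z hz ↦ ?_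
  rw [star_dotProduct_map_ofReal_mulVec hsymm, Complex.zero_lt_real]
  have hpos {v : n → ℝ} (hv : v ≠ 0) : 0 < v ⬝ᵥ (M *ᵥ v) := by
    simpa using hM.dotProduct_mulVec_pos hv
  have hnonneg (v : n → ℝ) : 0 ≤ v ⬝ᵥ (M *ᵥ v) := by
    simpa using hM.posSemidef.dotProduct_mulVec_nonneg v
  by_cases hre : (fun i ↦ (z i).re) = 0
  · have him : (fun i ↦ (z i).im) ≠ 0 := fun him ↦
      hz (funext fun i ↦ Complex.ext (congrFun hre i) (congrFun him i))
    exact add_pos_of_nonneg_of_pos (hnonneg _) (hpos him)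
  · exact add_pos_of_pos_of_nonneg (hpos hre) (hnonneg _)

/-- In the order on `ℂ`, `a < μ` says that `μ - a` is real and positive, which is what the
positivity of `z* (M - a P) z = (μ - a) z* P z` and `z* P z` gives. -/
theorem lt_of_posDef_sub_smul {M P : Matrix n n ℂ} {a μ : ℂ} {z : n → ℂ}
    (hMP : (M - a • P).PosDef) (hP : P.PosDef) (hz : z ≠ 0) (hμ : M *ᵥ z = μ • P *ᵥ z) :
    a < μ := by
  have hp := hP.dotProduct_mulVec_pos hz
  have hq := hMP.dotProduct_mulVec_pos hz
  rw [sub_mulVec, hμ, smul_mulVec, ← sub_smul, dotProduct_smul, smul_eq_mul] at hq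
  simpa using pos_of_mul_pos_left hq hp.le

theorem lt_of_posDef_smul_sub {M P : Matrix n n ℂ} {b μ : ℂ} {z : n → ℂ}
    (hMP : (b • P - M).PosDef) (hP : P.PosDef) (hz : z ≠ 0) (hμ : M *ᵥ z = μ • P *ᵥ z) :
    μ < b := by
  have hneg : (-M - (-b) • P).PosDef := by rwa [neg_smul, sub_neg_eq_add, neg_add_eq_sub]
  exact neg_lt_neg_iff.mp <|
    lt_of_posDef_sub_smul hneg hP hz (μ := -μ) (by rw [neg_mulVec, hμ, neg_smul])

theorem map_mulVec_eq_smul_mulVec_of_inv_mul_mulVec {R S : Type*} [CommRing R] [CommRing S]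
    [DecidableEq n] {M P : Matrix n n R} (hP : IsUnit P.det) (f : R →+* S) {μ : S} {z : n → S}
    (hμ : (P⁻¹ * M).map f *ᵥ z = μ • z) : M.map f *ᵥ z = μ • P.map f *ᵥ z := by
  rw [← mul_nonsing_inv_cancel_left P M hP, Matrix.map_mul, ← mulVec_mulVec, hμ, mulVec_smul]

theorem PosDef.im_eq_zero_and_re_mem_Ioo_of_inv_mul_mulVec [DecidableEq n]
    {M P : Matrix n n ℝ} {a b : ℝ} (hP : P.PosDef) (ha : (M - a • P).PosDef)
    (hb : (b • P - M).PosDef) {μ : ℂ} {z : n → ℂ} (hz : z ≠ 0)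
    (hμ : (P⁻¹ * M).map (↑) *ᵥ z = μ • z) : μ.im = 0 ∧ μ.re ∈ Set.Ioo a b := by
  have hgen := map_mulVec_eq_smul_mulVec_of_inv_mul_mulVec
    ((isUnit_iff_isUnit_det P).mp hP.isUnit) Complex.ofRealHom hμ
  have haC := ha.map_ofReal
  have hbC := hb.map_ofReal
  simp only [Matrix.map_sub _ Complex.ofReal_sub, Matrix.map_smul' _ _ _ Complex.ofReal_mul]
    at haC hbC
  have hlow := Complex.lt_def.mp (lt_of_posDef_sub_smul haC hP.map_ofReal hz hgen)
  have hup := Complex.lt_def.mp (lt_of_posDef_smul_sub hbC hP.map_ofReal hz hgen)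
  simp only [Complex.ofReal_re, Complex.ofReal_im] at hlow hup
  exact ⟨hup.2, hlow.1, hup.1⟩

section RayleighQuotient

variable {A B : Matrix n n ℝ} (hA : A.IsSymm) (hB : B.IsSymm)
  (hBneg : ∀ x : n → ℝ, x ≠ 0 → x ⬝ᵥ (B *ᵥ x) < 0)
include hA hB hBneg

theorem posSemidef_smul_sub_of_le_div {c : ℝ}
    (h : ∀ x : n → ℝ, x ≠ 0 → c ≤ (x ⬝ᵥ (A *ᵥ x)) / (x ⬝ᵥ (B *ᵥ x))) :
    (c • B - A).PosSemidef := by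
  refine .of_dotProduct_mulVec_nonneg ?_ fun x ↦ ?_
  · simpa [IsHermitian] using ((hB.smul c).sub hA).eq
  · obtain rfl | hx := eq_or_ne x 0
    · simp
    have hc := h x hx
    rw [le_div_iff_of_neg (hBneg x hx)] at hc
    simp only [star_trivial, sub_mulVec, smul_mulVec, dotProduct_sub, dotProduct_smul, smul_eq_mul]
    linarith

theorem posSemidef_sub_smul_of_div_le {c : ℝ}
    (h : ∀ x : n → ℝ, x ≠ 0 → (x ⬝ᵥ (A *ᵥ x)) / (x ⬝ᵥ (B *ᵥ x)) ≤ c) :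
    (A - c • B).PosSemidef := by
  refine .of_dotProduct_mulVec_nonneg ?_ fun x ↦ ?_
  · simpa [IsHermitian] using (hA.sub (hB.smul c)).eq
  · obtain rfl | hx := eq_or_ne x 0
    · simp
    have hc := h x hx
    rw [div_le_iff_of_neg (hBneg x hx)] at hc
    simp only [star_trivial, sub_mulVec, smul_mulVec, dotProduct_sub, dotProduct_smul, smul_eq_mul]
    linarith

end RayleighQuotient

end Matrix

open Matrix in
theorem stmt16_general (N : ℕ) (A B : Matrix (Fin N) (Fin N) ℝ)
    (hAsymm : A.IsSymm) (hBsymm : B.IsSymm)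
    (hBneg : ∀ x : Fin N → ℝ, x ≠ 0 → x ⬝ᵥ (B *ᵥ x) < 0)
    (hAB : ∀ x : Fin N → ℝ, x ≠ 0 →
      1 / 2 ≤ (x ⬝ᵥ (A *ᵥ x)) / (x ⬝ᵥ (B *ᵥ x)) ∧
        (x ⬝ᵥ (A *ᵥ x)) / (x ⬝ᵥ (B *ᵥ x)) ≤ 3 / 2)
    (d : Fin N → ℝ) (hd : ∀ i, 0 ≤ d i)
    (M P : Matrix (Fin N) (Fin N) ℝ)
    (hM : M = 1 - A + Matrix.diagonal d) (hP : P = 1 - B + Matrix.diagonal d) :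
    P.PosDef ∧
      ∀ (μ : ℂ) (z : Fin N → ℂ), z ≠ 0 →
        ((P⁻¹ * M).map (fun a : ℝ => (a : ℂ))) *ᵥ z = μ • z →
        μ.im = 0 ∧ 1 / 2 < μ.re ∧ μ.re < 3 / 2 := by
  have hI : (1 + diagonal d).PosDef := PosDef.one.add_posSemidef (.diagonal hd)
  have hlow : (M - (1 / 2 : ℝ) • P).PosDef := by
    rw [show M - (1 / 2 : ℝ) • P = (1 / 2 : ℝ) • (1 + diagonal d) + ((1 / 2 : ℝ) • B - A) by
      rw [hM, hP]; module]
    exact (hI.smul (by norm_num)).add_posSemidef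
      (posSemidef_smul_sub_of_le_div hAsymm hBsymm hBneg fun x hx ↦ (hAB x hx).1)
  have hup : ((3 / 2 : ℝ) • P - M).PosDef := by
    rw [show (3 / 2 : ℝ) • P - M = (1 / 2 : ℝ) • (1 + diagonal d) + (A - (3 / 2 : ℝ) • B) by
      rw [hM, hP]; module]
    exact (hI.smul (by norm_num)).add_posSemidef
      (posSemidef_sub_smul_of_div_le hAsymm hBsymm hBneg fun x hx ↦ (hAB x hx).2)
  have hPpos : P.PosDef := by
    rw [show P = (3 / 2 : ℝ) • P - M + (M - (1 / 2 : ℝ) • P) by module]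
    exact hup.add hlow
  exact ⟨hPpos, fun μ z hz hμ ↦
    hPpos.im_eq_zero_and_re_mem_Ioo_of_inv_mul_mulVec hlow hup hz hμ⟩

open Matrix in
theorem stmt16 (N : ℕ) (A B : Matrix (Fin N) (Fin N) ℝ)
    (hAsymm : A.IsSymm) (hBsymm : B.IsSymm)
    (hAneg : ∀ x : Fin N → ℝ, x ≠ 0 → x ⬝ᵥ (A *ᵥ x) < 0)
    (hBneg : ∀ x : Fin N → ℝ, x ≠ 0 → x ⬝ᵥ (B *ᵥ x) < 0)
    (hAB : ∀ x : Fin N → ℝ, x ≠ 0 →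
      1 / 2 ≤ (x ⬝ᵥ (A *ᵥ x)) / (x ⬝ᵥ (B *ᵥ x)) ∧
        (x ⬝ᵥ (A *ᵥ x)) / (x ⬝ᵥ (B *ᵥ x)) ≤ 3 / 2)
    (d : Fin N → ℝ) (hd : ∀ i, 0 ≤ d i)
    (M P : Matrix (Fin N) (Fin N) ℝ)
    (hM : M = 1 - A + Matrix.diagonal d) (hP : P = 1 - B + Matrix.diagonal d) :
    P.PosDef ∧
      ∀ (μ : ℂ) (z : Fin N → ℂ), z ≠ 0 →
        ((P⁻¹ * M).map (fun a : ℝ => (a : ℂ))) *ᵥ z = μ • z →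
        μ.im = 0 ∧ 1 / 2 < μ.re ∧ μ.re < 3 / 2 :=
  stmt16_general N A B hAsymm hBsymm hBneg hAB d hd M P hM hP
end
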